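/- arXiv:2510.07404 — 7 statements merged into one kernel-verified Lean document; each statement's English description precedes it below -/
import Mathlib

section
/- Assign to each variable x_i the weight i. If f is an isobaric homogeneous polynomial of degree n in d variables of weight δ, then every monomial appearing in Hess(f) has weight exactly d(δ - d + 1); in particular Hess(f) is isobaric of weight d(δ-d+1). -/
open MvPolynomial

/-- The Hessian determinant: determinant of the matrix of second partial derivatives. -/
noncomputable def hess {d : ℕ} (f : MvPolynomial (Fin d) ℂ) : MvPolynomial (Fin d) ℂ :=
  Matrix.det (Matrix.of fun i j : Fin d => MvPolynomial.pderiv i (MvPolynomial.pderiv j f))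

/-- A polynomial is isobaric of weight δ (variable xᵢ having weight i) if every
monomial in its support has weight δ. -/
def IsIsobaric {d : ℕ} (f : MvPolynomial (Fin d) ℂ) (δ : ℤ) : Prop :=
  ∀ α ∈ f.support, (∑ i : Fin d, (i : ℤ) * α i) = δ

lemma weight_eq_sum {d : ℕ} (α : Fin d →₀ ℕ) :
    Finsupp.weight (fun i : Fin d => (i : ℤ)) α = ∑ i : Fin d, (i : ℤ) * α i := by
  rw [Finsupp.weight_apply, Finsupp.sum_fintype]
  · exact Finset.sum_congr rfl fun i _ => by push_cast [nsmul_eq_mul]; ring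
  · intro i; simp

lemma iso_iff_wh {d : ℕ} (f : MvPolynomial (Fin d) ℂ) (δ : ℤ) :
    IsIsobaric f δ ↔ IsWeightedHomogeneous (fun i : Fin d => (i : ℤ)) f δ := by
  constructor
  · intro h α hα
    rw [weight_eq_sum]
    exact h α (by simpa [MvPolynomial.mem_support_iff] using hα)
  · intro h α hα
    rw [← weight_eq_sum]
    exact h (by simpa [MvPolynomial.mem_support_iff] using hα)

lemma pderiv_wh {d : ℕ} {w : Fin d → ℤ} {f : MvPolynomial (Fin d) ℂ} {m : ℤ} (j : Fin d)
    (hf : IsWeightedHomogeneous w f m) :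
    IsWeightedHomogeneous w (pderiv j f) (m - w j) := by
  conv_lhs => rw [f.as_sum]
  rw [map_sum]
  apply IsWeightedHomogeneous.sum
  intro α hα
  rw [pderiv_monomial]
  by_cases h : α j = 0
  · simp only [h, Nat.cast_zero, mul_zero]
    rw [(monomial _).map_zero]
    exact isWeightedHomogeneous_zero _ _ _
  · apply isWeightedHomogeneous_monomial
    have hle : Finsupp.single j 1 ≤ α := by
      rw [Finsupp.single_le_iff]
      omega
    have hsplit : (α - Finsupp.single j 1) + Finsupp.single j 1 = α :=
      tsub_add_cancel_of_le hle
    have hwα : Finsupp.weight w α = m := hf (by simpa [MvPolynomial.mem_support_iff] using hα)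
    have := congrArg (Finsupp.weight w) hsplit
    rw [map_add] at this
    have hsingle : Finsupp.weight w (Finsupp.single j 1) = w j := by
      rw [Finsupp.weight_apply, Finsupp.sum_single_index] <;> simp
    rw [hsingle, hwα] at this
    omega

lemma two_mul_sum_fin (d : ℕ) : 2 * ∑ i : Fin d, (i : ℤ) = d * (d - 1) := by
  induction d with
  | zero => simp
  | succ k ih =>
    rw [Fin.sum_univ_castSucc]
    simp only [Fin.coe_castSucc]
    push_cast
    push_cast at ih
    ring_nf
    ring_nf at ih
    omega

theorem stmt_2 (d n : ℕ) (δ : ℤ) (f : MvPolynomial (Fin d) ℂ)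
    (hhom : f.IsHomogeneous n) (hiso : IsIsobaric f δ) :
    IsIsobaric (hess f) ((d : ℤ) * (δ - d + 1)) := by
  set w : Fin d → ℤ := fun i : Fin d => (i : ℤ) with hw
  rw [iso_iff_wh]
  rw [iso_iff_wh] at hiso
  rw [hess, Matrix.det_apply']
  apply IsWeightedHomogeneous.sum
  intro σ _
  have hprod : IsWeightedHomogeneous w
      (∏ i : Fin d, (Matrix.of fun i j : Fin d =>
        MvPolynomial.pderiv i (MvPolynomial.pderiv j f)) (σ i) i)
      (∑ i : Fin d, (δ - w i - w (σ i))) := by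
    apply IsWeightedHomogeneous.prod
    intro i _
    have h1 : IsWeightedHomogeneous w (pderiv i f) (δ - w i) := pderiv_wh i hiso
    have h2 : IsWeightedHomogeneous w (pderiv (σ i) (pderiv i f)) (δ - w i - w (σ i)) :=
      pderiv_wh (σ i) h1
    simpa using h2
  have hsum : (∑ i : Fin d, (δ - w i - w (σ i))) = (d : ℤ) * (δ - d + 1) := by
    have hcomp : ∑ i : Fin d, w (σ i) = ∑ i : Fin d, w i := Equiv.sum_comp σ w
    have h2 := two_mul_sum_fin d
    simp only [Finset.sum_sub_distrib, Finset.sum_const, Finset.card_univ, Fintype.card_fin,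
      nsmul_eq_mul, hcomp]
    simp only [hw] at h2 ⊢
    ring_nf
    ring_nf at h2
    omega
  rw [hsum] at hprod
  have hε : ((Matrix.detRowAlternating : AlternatingMap ℂ (Fin d → ℂ) ℂ (Fin d)) ≠ 0) ∨ True :=
    Or.inr trivial
  have hcast : (((Equiv.Perm.sign σ : ℤ) : MvPolynomial (Fin d) ℂ)) =
      C (((Equiv.Perm.sign σ : ℤ) : ℂ)) := by
    rw [map_intCast]
  rw [show ((d : ℤ) * (δ - d + 1)) = 0 + (d : ℤ) * (δ - d + 1) by ring]
  apply IsWeightedHomogeneous.mul _ hprod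
  rw [hcast]
  exact isWeightedHomogeneous_C _ _
end

section
/- Assign to each variable x_i the weight i. If f is an isobaric homogeneous polynomial of degree n in d variables of weight δ = d - 1, then Hess(f) = λ x_0^{d(n-2)} for some scalar λ ∈ C (possibly zero). -/
/-!
Every Hessian entry `∂ᵢ∂ⱼf` is homogeneous of degree `n - 2` and isobaric of weight
`(d - 1) - i - j`. Each term of the Leibniz expansion of the determinant is a product
`∏ᵢ ∂_{σ i}∂ᵢ f`, so `Hess f` is homogeneous of degree `d (n - 2)` and isobaric of weight
`d (d - 1) - 2 ∑ i = 0`. Since `x₀` is the only variable of weight zero, the only monomial of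
weight zero and degree `d (n - 2)` is `x₀ ^ (d (n - 2))`.
-/

open MvPolynomial

theorem Matrix.det_isWeightedHomogeneous {ι σ R M : Type*} [Fintype ι] [DecidableEq ι]
    [CommRing R] [AddCommMonoid M] {w : σ → M} (A : Matrix ι ι (MvPolynomial σ R))
    (a b : ι → M) (hA : ∀ i j, (A i j).IsWeightedHomogeneous w (a i + b j)) :
    A.det.IsWeightedHomogeneous w (∑ i, a i + ∑ j, b j) := by
  rw [Matrix.det_apply]
  refine IsWeightedHomogeneous.sum _ _ _ fun e _ => ?_
  have hprod := IsWeightedHomogeneous.prod Finset.univ (fun i => A (e i) i) _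
    fun i _ => hA (e i) i
  rw [Finset.sum_add_distrib, Equiv.sum_comp e a] at hprod
  rw [Units.smul_def]
  exact (weightedHomogeneousSubmodule R w _).smul_of_tower_mem _ hprod

theorem Finsupp.eq_single_of_weight_eq_zero {σ : Type*} {w : σ → ℤ} {i₀ : σ}
    (hw₀ : 0 ≤ w i₀) (hw : ∀ i, i ≠ i₀ → 0 < w i) {β : σ →₀ ℕ} (hβ : β.weight w = 0) :
    β = Finsupp.single i₀ (β i₀) := by
  classical
  have hnonneg : ∀ i ∈ β.support, 0 ≤ β i • w i := fun i _ => by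
    rcases eq_or_ne i i₀ with rfl | hi
    · exact smul_nonneg (Nat.zero_le _) hw₀
    · exact smul_nonneg (Nat.zero_le _) (hw i hi).le
  rw [Finsupp.weight_apply, Finsupp.sum, Finset.sum_eq_zero_iff_of_nonneg hnonneg] at hβ
  ext i
  rcases eq_or_ne i i₀ with rfl | hi
  · simp
  · rw [Finsupp.single_eq_of_ne hi]
    by_contra h
    have := hβ i (Finsupp.mem_support_iff.mpr h)
    simp [h, (hw i hi).ne'] at this

theorem MvPolynomial.eq_C_mul_X_pow_of_isWeightedHomogeneous_zero {σ R : Type*} [CommSemiring R]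
    {w : σ → ℤ} {i₀ : σ} (hw₀ : 0 ≤ w i₀) (hw : ∀ i, i ≠ i₀ → 0 < w i)
    {p : MvPolynomial σ R} {m : ℕ} (hp : p.IsWeightedHomogeneous w 0) (hpm : p.IsHomogeneous m) :
    p = C (coeff (Finsupp.single i₀ m) p) * X i₀ ^ m := by
  rw [C_mul_X_pow_eq_monomial]
  refine eq_monomial_of_support_subset_singleton fun β hβ => ?_
  have hβ' := Finsupp.eq_single_of_weight_eq_zero hw₀ hw (hp (mem_support_iff.mp hβ))
  have hdeg := hpm (mem_support_iff.mp hβ)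
  rw [hβ', Finsupp.weight_single, Pi.one_apply, smul_eq_mul, mul_one] at hdeg
  rwa [hdeg] at hβ'

theorem hess_isWeightedHomogeneous {d : ℕ} {M : Type*} [AddCommGroup M] {w : Fin d → M}
    {f : MvPolynomial (Fin d) ℂ} {m : M} (hf : f.IsWeightedHomogeneous w m) :
    (hess f).IsWeightedHomogeneous w (d • m - 2 • ∑ i, w i) := by
  have hentry : ∀ i j, (pderiv i (pderiv j f)).IsWeightedHomogeneous w (-w i + (m - w j)) :=
    fun i j => (hf.pderiv (sub_add_cancel m (w j))).pderiv (by abel)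
  have hdeg : ∑ i, -w i + ∑ j, (m - w j) = d • m - 2 • ∑ i, w i := by
    simp only [Finset.sum_neg_distrib, Finset.sum_sub_distrib, Finset.sum_const,
      Finset.card_univ, Fintype.card_fin]
    abel
  rw [← hdeg]
  exact Matrix.det_isWeightedHomogeneous (Matrix.of fun i j => pderiv i (pderiv j f)) _ _ hentry

theorem hess_isHomogeneous {d n : ℕ} {f : MvPolynomial (Fin d) ℂ} (hf : f.IsHomogeneous n) :
    (hess f).IsHomogeneous (d * (n - 2)) := by
  have hentry : ∀ i j : Fin d, (pderiv i (pderiv j f)).IsHomogeneous (n - 2 + 0) :=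
    fun i j => hf.pderiv.pderiv
  have := Matrix.det_isWeightedHomogeneous (Matrix.of fun i j => pderiv i (pderiv j f))
    (fun _ => n - 2) (fun _ => 0) hentry
  rwa [Finset.sum_const, Finset.sum_const_zero, add_zero, Finset.card_univ, Fintype.card_fin,
    smul_eq_mul] at this

theorem IsIsobaric.isWeightedHomogeneous {d : ℕ} {f : MvPolynomial (Fin d) ℂ} {δ : ℤ}
    (hf : IsIsobaric f δ) : f.IsWeightedHomogeneous (fun i : Fin d => (i : ℤ)) δ := by
  intro α hα
  rw [Finsupp.weight_eq_sum]
  simpa [mul_comm] using hf α (mem_support_iff.mpr hα)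

theorem Fin.sum_val_mul_two (d : ℕ) : (∑ i : Fin d, (i : ℤ)) * 2 = d * (d - 1) := by
  induction d with
  | zero => simp
  | succ d ih =>
    rw [Fin.sum_univ_castSucc, add_mul]
    simp only [Fin.val_castSucc, Fin.val_last, ih]
    push_cast
    ring

theorem stmt_4 (d n : ℕ) (hd : 0 < d) (f : MvPolynomial (Fin d) ℂ)
    (hhom : f.IsHomogeneous n) (hiso : IsIsobaric f ((d : ℤ) - 1)) :
    ∃ lam : ℂ, hess f = C lam * X (⟨0, hd⟩ : Fin d) ^ (d * (n - 2)) := by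
  have hweight := hess_isWeightedHomogeneous hiso.isWeightedHomogeneous
  have hzero : d • ((d : ℤ) - 1) - 2 • ∑ i : Fin d, ((i : ℕ) : ℤ) = 0 := by
    rw [nsmul_eq_mul, nsmul_eq_mul]
    push_cast
    linarith [Fin.sum_val_mul_two d]
  rw [hzero] at hweight
  exact ⟨_, eq_C_mul_X_pow_of_isWeightedHomogeneous_zero
    (w := fun i : Fin d => ((i : ℕ) : ℤ)) le_rfl
    (fun i hi => by simpa [Fin.ext_iff, Nat.pos_iff_ne_zero] using hi) hweight
    (hess_isHomogeneous hhom)⟩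
end

section
/- The Perazzo cubic f = x_0² x_4 + x_0 x_1 x_3 + x_1² x_2 in five variables is concise (its five first partial derivatives ∂f/∂x_0, …, ∂f/∂x_4 are linearly independent over C) yet Hess(f) = 0. -/
open MvPolynomial

theorem stmt_6 (f : MvPolynomial (Fin 5) ℂ)
    (hf : f = X 0 ^ 2 * X 4 + X 0 * X 1 * X 3 + X 1 ^ 2 * X 2) :
    LinearIndependent ℂ (fun i : Fin 5 => pderiv i f) ∧ hess f = 0 := by
  have h0 : pderiv 0 f = X 0 * X 4 + X 0 * X 4 + X 1 * X 3 := by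
    subst hf; simp [pow_two, pderiv_mul, pderiv_X_self, pderiv_X_of_ne]; ring
  have h1 : pderiv 1 f = X 0 * X 3 + (X 1 * X 2 + X 1 * X 2) := by
    subst hf; simp [pow_two, pderiv_mul, pderiv_X_self, pderiv_X_of_ne]; ring
  have h2 : pderiv 2 f = X 1 * X 1 := by
    subst hf; simp [pow_two, pderiv_mul, pderiv_X_self, pderiv_X_of_ne]
  have h3 : pderiv 3 f = X 0 * X 1 := by
    subst hf; simp [pow_two, pderiv_mul, pderiv_X_self, pderiv_X_of_ne]
  have h4 : pderiv 4 f = X 0 * X 0 := by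
    subst hf; simp [pow_two, pderiv_mul, pderiv_X_self, pderiv_X_of_ne]
  constructor
  · rw [Fintype.linearIndependent_iff]
    intro g hg
    rw [Fin.sum_univ_five] at hg
    simp only [h0, h1, h2, h3, h4] at hg
    have e4 := congrArg (eval ![1, 0, 0, 0, 0]) hg
    have e2 := congrArg (eval ![0, 1, 0, 0, 0]) hg
    have e3 := congrArg (eval ![1, 1, 0, 0, 0]) hg
    have e0 := congrArg (eval ![1, 0, 0, 0, 1]) hg
    have e1 := congrArg (eval ![0, 1, 1, 0, 0]) hg
    simp [smul_eq_C_mul] at e0 e1 e2 e3 e4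
    have g0 : g 0 = 0 := by linear_combination (e0 - e4) / 2
    have g1 : g 1 = 0 := by linear_combination (e1 - e2) / 2
    have g3 : g 3 = 0 := by linear_combination e3 - e2 - e4
    intro i
    fin_cases i <;> assumption
  · rw [hess, ← Matrix.exists_mulVec_eq_zero_iff]
    refine ⟨![0, 0, X 0 * X 0, -(X 0 * X 1 + X 0 * X 1), X 1 * X 1], ?_, ?_⟩
    · intro h
      have := congrFun h 2
      simp at this
    · funext i
      fin_cases i <;>
        simp [Matrix.mulVec, dotProduct, Fin.sum_univ_five, h0, h1, h2, h3, h4,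
          pderiv_mul, pderiv_X_self, pderiv_X_of_ne] <;> ring
end

section
/- For f = x_0⁴ + x_1⁴ ∈ Sym⁴C², the partially polarized Hessian Hess_x(Σ_{i,j} u_i v_j ∂²f/∂x_i∂x_j) equals 576 u_0 u_1 v_0 v_1, which is not the square of any bilinear form in (u,v); nevertheless substituting u = v = x yields 576 (x_0 x_1)² = 4 Hess(f), a perfect square. -/
open MvPolynomial

lemma aux_second_deriv (i j : Fin 2) :
    pderiv i (pderiv j ((X 0:MvPolynomial (Fin 2) ℂ)^4 + X 1^4)) =
    if i = j then (if j = 0 then C 12 * X 0 ^2 else C 12 * X 1 ^2) else 0 := by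
  fin_cases i <;> fin_cases j <;>
    simp [Derivation.leibniz_pow, pderiv_X, Pi.single_apply,
      show ((4:MvPolynomial (Fin 2) ℂ)) = C 4 by simp [map_ofNat]] <;>
    rw [show (C 12 : MvPolynomial (Fin 2) ℂ) = C 4 * 3 by
      rw [show ((3:MvPolynomial (Fin 2) ℂ)) = C 3 by simp [map_ofNat], ← map_mul]; norm_num] <;>
    ring

theorem stmt_12 (f : MvPolynomial (Fin 2) ℂ) (hf : f = X 0 ^ 4 + X 1 ^ 4) :
    -- the partially polarized Hessian
    (∀ u v : Fin 2 → ℂ,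
      hess (∑ i : Fin 2, ∑ j : Fin 2, C (u i * v j) * pderiv i (pderiv j f))
        = C (576 * u 0 * u 1 * v 0 * v 1))
    -- it is not the square of a bilinear form in (u, v)
    ∧ (¬ ∃ B : Matrix (Fin 2) (Fin 2) ℂ, ∀ u v : Fin 2 → ℂ,
        576 * u 0 * u 1 * v 0 * v 1
          = (∑ i : Fin 2, ∑ j : Fin 2, B i j * u i * v j) ^ 2)
    -- substituting u = v = x yields 576 (x₀x₁)² = 4 Hess(f)
    ∧ (∀ x : Fin 2 → ℂ,
        576 * (x 0 * x 1) ^ 2 = 4 * eval x (hess f)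
          ∧ 576 * (x 0 * x 1) ^ 2 = (24 * (x 0 * x 1)) ^ 2) := by
  subst hf
  refine ⟨?_, ?_, ?_⟩
  · intro u v
    show Matrix.det _ = _
    simp only [Matrix.of_apply, Fin.sum_univ_two, aux_second_deriv]
    norm_num
    simp only [Matrix.det_fin_two, Matrix.of_apply, Derivation.leibniz, pderiv_C, pderiv_X,
      Derivation.leibniz_pow, Pi.single_apply, smul_eq_mul]
    norm_num
    simp only [← map_mul, ← map_ofNat (C : ℂ →+* MvPolynomial (Fin 2) ℂ), ← map_add]
    simp only [pderiv_C, mul_zero, zero_mul, add_zero, zero_add]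
    simp only [← map_mul, ← map_pow, ← map_add]
    ring
  · rintro ⟨B, hB⟩
    have h00 := hB ![1,0] ![1,0]
    have h01 := hB ![1,0] ![0,1]
    have h10 := hB ![0,1] ![1,0]
    have h11 := hB ![0,1] ![0,1]
    have hall := hB ![1,1] ![1,1]
    simp [Fin.sum_univ_two] at h00 h01 h10 h11 hall
    have b00 : B 0 0 = 0 := pow_eq_zero_iff two_ne_zero |>.mp h00.symm
    have b01 : B 0 1 = 0 := pow_eq_zero_iff two_ne_zero |>.mp h01.symm
    have b10 : B 1 0 = 0 := pow_eq_zero_iff two_ne_zero |>.mp h10.symm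
    have b11 : B 1 1 = 0 := pow_eq_zero_iff two_ne_zero |>.mp h11.symm
    rw [b00, b01, b10, b11] at hall
    norm_num at hall
  · intro x
    constructor
    · unfold hess
      simp only [Matrix.det_fin_two, Matrix.of_apply, aux_second_deriv]
      norm_num [eval_mul, eval_pow]
      ring
    · ring
end

section
/- For the quartic g = x_2⁴ + x_0 x_2² x_3 + x_1 x_2 x_3² + x_3⁴ in four variables, Hess(g) = 9(x_2 x_3)⁴; and the partially polarized Hessian Hess_x(Σ_{i,j=0}^{3} u_i v_j ∂²g/∂x_i∂x_j) equals 16(u_3² v_2² + u_2 u_3 v_2 v_3 + u_2² v_3²)², which is not a fourth power of a bilinear form in (u,v). -/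
/-!
The quartic `g` has degree one in `x₀, x₁` jointly, and since partial derivatives commute so does
every polarization `∑ uᵢ vⱼ ∂ᵢ∂ⱼ g`. The Hessian matrix of such a polynomial has a zero upper-left
`2 × 2` block, so its determinant is the square of the minor `(∂ₐ∂_b)`, `a ∈ {0, 1}`, `b ∈ {2, 3}`.
For `g` that minor is `3 x₂² x₃²`; for the polarization its entries are the constants
`2 (u₂v₃ + u₃v₂)`, `2 u₂v₂`, `2 u₃v₃`.

If the result were `(uᵀ B v)⁴`, evaluating at `(e₂, e₂)`, `(e₃, e₃)`, `(e₂, e₃)`, `(e₃, e₂)` and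
`(e₂ ± e₃, e₂ + e₃)` would give `B₂₃⁴ = B₃₂⁴ = 16` but `B₂₃² B₃₂² = 8`.
-/

open MvPolynomial

theorem pderiv_pderiv_comm {σ R : Type*} [CommRing R] (i j : σ) (p : MvPolynomial σ R) :
    pderiv i (pderiv j p) = pderiv j (pderiv i p) := by
  classical
  have : ⁅(pderiv i : Derivation R (MvPolynomial σ R) _), pderiv j⁆ =
      (0 : Derivation R (MvPolynomial σ R) _) := by
    refine derivation_ext fun k => ?_
    simp only [Derivation.commutator_apply, pderiv_X, Pi.single_apply]
    split_ifs <;> simp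
  rw [← sub_eq_zero, ← Derivation.commutator_apply, this, Derivation.zero_apply]

theorem Matrix.det_fin_four_of_zero_block {R : Type*} [CommRing R] (A : Matrix (Fin 4) (Fin 4) R)
    (h00 : A 0 0 = 0) (h01 : A 0 1 = 0) (h10 : A 1 0 = 0) (h11 : A 1 1 = 0) :
    A.det = (A 0 2 * A 1 3 - A 0 3 * A 1 2) * (A 2 0 * A 3 1 - A 2 1 * A 3 0) := by
  simp [Matrix.det_succ_row_zero, Fin.sum_univ_succ, Fin.succAbove, h00, h01, h10, h11]
  ring

theorem hess_eq_sq_of_pderiv_pderiv_eq_zero (f : MvPolynomial (Fin 4) ℂ)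
    (hf : ∀ i j : Fin 4, i ≤ 1 → j ≤ 1 → pderiv i (pderiv j f) = 0) :
    hess f = (pderiv 2 (pderiv 0 f) * pderiv 3 (pderiv 1 f)
      - pderiv 3 (pderiv 0 f) * pderiv 2 (pderiv 1 f)) ^ 2 := by
  rw [hess, Matrix.det_fin_four_of_zero_block (Matrix.of fun i j : Fin 4 => pderiv i (pderiv j f))
    (hf 0 0 (by decide) (by decide)) (hf 0 1 (by decide) (by decide))
    (hf 1 0 (by decide) (by decide)) (hf 1 1 (by decide) (by decide))]
  simp only [Matrix.of_apply]
  rw [pderiv_pderiv_comm 0 2, pderiv_pderiv_comm 0 3, pderiv_pderiv_comm 1 2,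
    pderiv_pderiv_comm 1 3]
  ring

section Polar

variable {σ R : Type*} [Fintype σ] [CommRing R]

noncomputable def polar (u v : σ → R) (f : MvPolynomial σ R) : MvPolynomial σ R :=
  ∑ i, ∑ j, C (u i * v j) * pderiv i (pderiv j f)

theorem pderiv_pderiv_polar (u v : σ → R) (f : MvPolynomial σ R) (k l : σ) :
    pderiv k (pderiv l (polar u v f)) = polar u v (pderiv k (pderiv l f)) := by
  simp only [polar, map_sum, pderiv_C_mul]
  congr! 3 with i _ j _
  rw [pderiv_pderiv_comm l i, pderiv_pderiv_comm l j, pderiv_pderiv_comm k i,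
    pderiv_pderiv_comm k j]

theorem polar_zero (u v : σ → R) : polar u v 0 = 0 := by simp [polar]

theorem polar_C_mul (u v : σ → R) (c : R) (f : MvPolynomial σ R) :
    polar u v (C c * f) = C c * polar u v f := by
  simp only [polar, pderiv_C_mul, Finset.mul_sum]
  congr! 2
  ring

theorem polar_X_mul_X [DecidableEq σ] (u v : σ → R) (a b : σ) :
    polar u v (X a * X b) = C (u a * v b + u b * v a) := by
  simp [polar, Pi.single_apply, apply_ite (pderiv _ : MvPolynomial σ R → _), mul_add,
    Finset.sum_add_distrib, mul_ite, Finset.sum_ite_eq]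

end Polar

noncomputable def quartic : MvPolynomial (Fin 4) ℂ :=
  X 2 ^ 4 + X 0 * X 2 ^ 2 * X 3 + X 1 * X 2 * X 3 ^ 2 + X 3 ^ 4

theorem pderiv_pderiv_quartic_eq_zero (i j : Fin 4) (hi : i ≤ 1) (hj : j ≤ 1) :
    pderiv i (pderiv j quartic) = 0 := by
  fin_cases i <;> fin_cases j <;> simp_all [quartic]

theorem pderiv_pderiv_quartic :
    pderiv 2 (pderiv 0 quartic) = C 2 * (X 2 * X 3) ∧
      pderiv 3 (pderiv 1 quartic) = C 2 * (X 2 * X 3) ∧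
      pderiv 3 (pderiv 0 quartic) = X 2 * X 2 ∧ pderiv 2 (pderiv 1 quartic) = X 3 * X 3 := by
  refine ⟨?_, ?_, ?_, ?_⟩ <;> simp [quartic, map_ofNat] <;> ring

theorem hess_quartic : hess quartic = C 9 * (X 2 * X 3) ^ 4 := by
  obtain ⟨h20, h31, h30, h21⟩ := pderiv_pderiv_quartic
  rw [hess_eq_sq_of_pderiv_pderiv_eq_zero _ pderiv_pderiv_quartic_eq_zero, h20, h31, h30, h21,
    map_ofNat, map_ofNat]
  ring

theorem hess_polar_quartic (u v : Fin 4 → ℂ) :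
    hess (polar u v quartic)
      = C (16 * (u 3 ^ 2 * v 2 ^ 2 + u 2 * u 3 * v 2 * v 3 + u 2 ^ 2 * v 3 ^ 2) ^ 2) := by
  obtain ⟨h20, h31, h30, h21⟩ := pderiv_pderiv_quartic
  rw [hess_eq_sq_of_pderiv_pderiv_eq_zero]
  · simp only [pderiv_pderiv_polar, h20, h31, h30, h21, polar_C_mul, polar_X_mul_X, ← map_mul,
      ← map_sub, ← map_pow]
    congr 1
    ring
  · intro i j hi hj
    rw [pderiv_pderiv_polar, pderiv_pderiv_quartic_eq_zero i j hi hj, polar_zero]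

theorem not_exists_bilinear_pow_four : ¬ ∃ B : Matrix (Fin 4) (Fin 4) ℂ, ∀ u v : Fin 4 → ℂ,
    16 * (u 3 ^ 2 * v 2 ^ 2 + u 2 * u 3 * v 2 * v 3 + u 2 ^ 2 * v 3 ^ 2) ^ 2
      = (∑ i : Fin 4, ∑ j : Fin 4, B i j * u i * v j) ^ 4 := by
  rintro ⟨B, hB⟩
  have h (a b c d : ℂ) : 16 * (b ^ 2 * c ^ 2 + a * b * c * d + a ^ 2 * d ^ 2) ^ 2
      = (B 2 2 * a * c + B 2 3 * a * d + B 3 2 * b * c + B 3 3 * b * d) ^ 4 := by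
    simpa [Fin.sum_univ_four, add_assoc] using hB ![0, 0, a, b] ![0, 0, c, d]
  have h22 : B 2 2 = 0 := by simpa using (h 1 0 1 0).symm
  have h33 : B 3 3 = 0 := by simpa using (h 0 1 0 1).symm
  have hx := h 1 0 0 1
  have hy := h 0 1 1 0
  have hsum := h 1 1 1 1
  have hdiff := h 1 (-1) 1 1
  simp only [h22, h33] at hx hy hsum hdiff
  norm_num at hx hy hsum hdiff
  set x := B 2 3
  set y := B 3 2
  have hxy : x ^ 2 * y ^ 2 = 8 := by linear_combination (2 * hx + 2 * hy - hsum - hdiff) / 12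
  have : (192 : ℂ) = 0 := by linear_combination 16 * hy + y ^ 4 * hx + (x ^ 2 * y ^ 2 + 8) * hxy
  norm_num at this

theorem stmt_13 (g : MvPolynomial (Fin 4) ℂ)
    (hg : g = X 2 ^ 4 + X 0 * X 2 ^ 2 * X 3 + X 1 * X 2 * X 3 ^ 2 + X 3 ^ 4) :
    hess g = C 9 * (X 2 * X 3) ^ 4
    ∧ (∀ u v : Fin 4 → ℂ,
        hess (∑ i : Fin 4, ∑ j : Fin 4, C (u i * v j) * pderiv i (pderiv j g))
          = C (16 * (u 3 ^ 2 * v 2 ^ 2 + u 2 * u 3 * v 2 * v 3 + u 2 ^ 2 * v 3 ^ 2) ^ 2))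
    ∧ ¬ ∃ B : Matrix (Fin 4) (Fin 4) ℂ, ∀ u v : Fin 4 → ℂ,
        16 * (u 3 ^ 2 * v 2 ^ 2 + u 2 * u 3 * v 2 * v 3 + u 2 ^ 2 * v 3 ^ 2) ^ 2
          = (∑ i : Fin 4, ∑ j : Fin 4, B i j * u i * v j) ^ 4 := by
  obtain rfl : g = quartic := hg
  exact ⟨hess_quartic, hess_polar_quartic, not_exists_bilinear_pow_four⟩
end

section
/- For B. Segre's quaternary form f = x_0^{2m} + (1-2m) x_1^{2m} - x_2^m x_3^m (m ≥ 1), the Hessian factors as a perfect square: Hess(f) = [2m²(2m-1)²(x_0 x_1 x_2 x_3)^{m-1}]². -/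
open MvPolynomial

set_option maxHeartbeats 1000000

theorem det4 {R : Type*} [CommRing R] (a b c d e : R) :
    Matrix.det !![a,0,0,0;0,b,0,0;0,0,c,e;0,0,e,d] = a*b*(c*d-e*e) := by
  simp [Matrix.det_succ_row_zero, Fin.sum_univ_succ]
  ring

lemma pderiv_natCast_mul (i : Fin 4) (n : ℕ) (p : MvPolynomial (Fin 4) ℂ) :
    pderiv i ((n : MvPolynomial (Fin 4) ℂ) * p) = n * pderiv i p := by
  rw [← map_natCast (C : ℂ →+* MvPolynomial (Fin 4) ℂ) n, pderiv_C_mul]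

lemma pderiv_natCast (i : Fin 4) (n : ℕ) :
    pderiv i ((n : MvPolynomial (Fin 4) ℂ)) = 0 := by
  rw [← map_natCast (C : ℂ →+* MvPolynomial (Fin 4) ℂ) n, pderiv_C]

lemma pd_add (i : Fin 4) (p q : MvPolynomial (Fin 4) ℂ) :
    pderiv i (p + q) = pderiv i p + pderiv i q := map_add _ _ _

lemma pd_sub (i : Fin 4) (p q : MvPolynomial (Fin 4) ℂ) :
    pderiv i (p - q) = pderiv i p - pderiv i q := map_sub _ _ _

lemma pd_neg (i : Fin 4) (p : MvPolynomial (Fin 4) ℂ) :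
    pderiv i (-p) = -(pderiv i p) := map_neg _ _

lemma stmt_aux (j : ℕ) (f : MvPolynomial (Fin 4) ℂ)
    (hf : f = X 0 ^ (2 * j + 4) + C (1 - 2 * ((j:ℂ)+2)) * X 1 ^ (2 * j + 4)
        - X 2 ^ (j+2) * X 3 ^ (j+2)) :
    hess f
      = (C (2 * ((j:ℂ)+2) ^ 2 * (2 * ((j:ℂ)+2) - 1) ^ 2)
          * (X 0 * X 1 * X 2 * X 3) ^ (j + 1)) ^ 2 := by
  have e1 : 2*j+4-1 = 2*j+3 := by omega
  have e2 : 2*j+3-1 = 2*j+2 := by omega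
  have e3 : j+2-1 = j+1 := by omega
  have e4 : j+1-1 = j := by omega
  have n10 : (1 : Fin 4) ≠ 0 := by decide
  have n20 : (2 : Fin 4) ≠ 0 := by decide
  have n30 : (3 : Fin 4) ≠ 0 := by decide
  have n01 : (0 : Fin 4) ≠ 1 := by decide
  have n21 : (2 : Fin 4) ≠ 1 := by decide
  have n31 : (3 : Fin 4) ≠ 1 := by decide
  have n02 : (0 : Fin 4) ≠ 2 := by decide
  have n12 : (1 : Fin 4) ≠ 2 := by decide
  have n32 : (3 : Fin 4) ≠ 2 := by decide
  have n03 : (0 : Fin 4) ≠ 3 := by decide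
  have n13 : (1 : Fin 4) ≠ 3 := by decide
  have n23 : (2 : Fin 4) ≠ 3 := by decide
  have hc : C (1 - 2*((j:ℂ)+2)) = -(((2*j+3 : ℕ) : MvPolynomial (Fin 4) ℂ)) := by
    rw [← map_natCast (C : ℂ →+* MvPolynomial (Fin 4) ℂ) (2*j+3), ← map_neg]
    congr 1
    push_cast
    ring
  have h0 : pderiv 0 f = ((2*j+4 : ℕ) : MvPolynomial (Fin 4) ℂ) * X 0 ^ (2*j+3) := by
    subst hf
    simp only [pd_add, pd_sub, pderiv_mul, pderiv_pow, pderiv_C_mul, pderiv_X_self,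
      pderiv_X_of_ne n10, pderiv_X_of_ne n20, pderiv_X_of_ne n30, e1, e3,
      mul_one, mul_zero, zero_mul, add_zero, zero_add, sub_zero, pderiv_C]
  have h1 : pderiv 1 f = -(((2*j+3 : ℕ) : MvPolynomial (Fin 4) ℂ)) *
      (((2*j+4 : ℕ) : MvPolynomial (Fin 4) ℂ) * X 1 ^ (2*j+3)) := by
    subst hf
    simp only [pd_add, pd_sub, pderiv_mul, pderiv_pow, pderiv_C_mul, pderiv_X_self,
      pderiv_X_of_ne n01, pderiv_X_of_ne n21, pderiv_X_of_ne n31, e1, e3, pd_neg, pderiv_natCast,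
      mul_one, mul_zero, zero_mul, add_zero, zero_add, sub_zero, neg_zero, pderiv_C, hc]
  have h2 : pderiv 2 f = -(((j+2 : ℕ) : MvPolynomial (Fin 4) ℂ) * (X 2 ^ (j+1) * X 3 ^ (j+2))) := by
    subst hf
    simp only [pd_add, pd_sub, pderiv_mul, pderiv_pow, pderiv_C_mul, pderiv_X_self,
      pderiv_X_of_ne n02, pderiv_X_of_ne n12, pderiv_X_of_ne n32, e1, e3,
      mul_one, mul_zero, zero_mul, add_zero, zero_add, sub_zero, zero_sub, pderiv_C]
    ring
  have h3 : pderiv 3 f = -(((j+2 : ℕ) : MvPolynomial (Fin 4) ℂ) * (X 2 ^ (j+2) * X 3 ^ (j+1))) := by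
    subst hf
    simp only [pd_add, pd_sub, pderiv_mul, pderiv_pow, pderiv_C_mul, pderiv_X_self,
      pderiv_X_of_ne n03, pderiv_X_of_ne n13, pderiv_X_of_ne n23, e1, e3,
      mul_one, mul_zero, zero_mul, add_zero, zero_add, sub_zero, zero_sub, pderiv_C]
    ring
  have hexp : (Matrix.of fun i k : Fin 4 => pderiv i (pderiv k f)) =
      !![pderiv 0 (pderiv 0 f), pderiv 0 (pderiv 1 f), pderiv 0 (pderiv 2 f), pderiv 0 (pderiv 3 f);
         pderiv 1 (pderiv 0 f), pderiv 1 (pderiv 1 f), pderiv 1 (pderiv 2 f), pderiv 1 (pderiv 3 f);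
         pderiv 2 (pderiv 0 f), pderiv 2 (pderiv 1 f), pderiv 2 (pderiv 2 f), pderiv 2 (pderiv 3 f);
         pderiv 3 (pderiv 0 f), pderiv 3 (pderiv 1 f), pderiv 3 (pderiv 2 f), pderiv 3 (pderiv 3 f)] :=
    (Matrix.etaExpand_eq _).symm
  have SD : ∀ (i : Fin 4) (p : MvPolynomial (Fin 4) ℂ), True := fun _ _ => trivial
  -- second derivatives
  have h00 : pderiv 0 (pderiv 0 f) =
      ((2*j+4 : ℕ) : MvPolynomial (Fin 4) ℂ) * (((2*j+3 : ℕ) : MvPolynomial (Fin 4) ℂ) * X 0 ^ (2*j+2)) := by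
    rw [h0]
    simp only [pderiv_natCast_mul, pderiv_natCast, pderiv_mul, zero_mul, add_zero, zero_add, pderiv_pow, pderiv_X_self, e2, mul_one]
  have h01 : pderiv 0 (pderiv 1 f) = 0 := by
    rw [h1]
    simp only [neg_mul, pd_neg, pderiv_natCast_mul, pderiv_natCast, pderiv_mul, zero_mul, add_zero, zero_add, pderiv_pow, pderiv_X_of_ne n10, mul_zero,
      neg_zero]
  have h02 : pderiv 0 (pderiv 2 f) = 0 := by
    rw [h2]
    simp only [pd_neg, pderiv_natCast_mul, pderiv_natCast, pderiv_mul, pderiv_pow, pderiv_X_of_ne n20,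
      pderiv_X_of_ne n30, mul_zero, zero_mul, add_zero, neg_zero]
  have h03 : pderiv 0 (pderiv 3 f) = 0 := by
    rw [h3]
    simp only [pd_neg, pderiv_natCast_mul, pderiv_natCast, pderiv_mul, pderiv_pow, pderiv_X_of_ne n20,
      pderiv_X_of_ne n30, mul_zero, zero_mul, add_zero, neg_zero]
  have h10 : pderiv 1 (pderiv 0 f) = 0 := by
    rw [h0]
    simp only [pderiv_natCast_mul, pderiv_natCast, pderiv_mul, zero_mul, add_zero, zero_add, pderiv_pow, pderiv_X_of_ne n01, mul_zero]
  have h11 : pderiv 1 (pderiv 1 f) = -(((2*j+3 : ℕ) : MvPolynomial (Fin 4) ℂ)) *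
      (((2*j+4 : ℕ) : MvPolynomial (Fin 4) ℂ) * (((2*j+3 : ℕ) : MvPolynomial (Fin 4) ℂ) * X 1 ^ (2*j+2))) := by
    rw [h1]
    simp only [neg_mul, pd_neg, pderiv_natCast_mul, pderiv_natCast, pderiv_mul, zero_mul, add_zero, zero_add, pderiv_pow, pderiv_X_self, e2, mul_one]
  have h12 : pderiv 1 (pderiv 2 f) = 0 := by
    rw [h2]
    simp only [pd_neg, pderiv_natCast_mul, pderiv_natCast, pderiv_mul, pderiv_pow, pderiv_X_of_ne n21,
      pderiv_X_of_ne n31, mul_zero, zero_mul, add_zero, neg_zero]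
  have h13 : pderiv 1 (pderiv 3 f) = 0 := by
    rw [h3]
    simp only [pd_neg, pderiv_natCast_mul, pderiv_natCast, pderiv_mul, pderiv_pow, pderiv_X_of_ne n21,
      pderiv_X_of_ne n31, mul_zero, zero_mul, add_zero, neg_zero]
  have h20 : pderiv 2 (pderiv 0 f) = 0 := by
    rw [h0]
    simp only [pderiv_natCast_mul, pderiv_natCast, pderiv_mul, zero_mul, add_zero, zero_add, pderiv_pow, pderiv_X_of_ne n02, mul_zero]
  have h21 : pderiv 2 (pderiv 1 f) = 0 := by
    rw [h1]
    simp only [neg_mul, pd_neg, pderiv_natCast_mul, pderiv_natCast, pderiv_mul, zero_mul, add_zero, zero_add, pderiv_pow, pderiv_X_of_ne n12, mul_zero,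
      neg_zero]
  have h22 : pderiv 2 (pderiv 2 f) =
      -(((j+2 : ℕ) : MvPolynomial (Fin 4) ℂ) * (((j+1 : ℕ) : MvPolynomial (Fin 4) ℂ) * (X 2 ^ j * X 3 ^ (j+2)))) := by
    rw [h2]
    simp only [pd_neg, pderiv_natCast_mul, pderiv_natCast, pderiv_mul, pderiv_pow, pderiv_X_self,
      pderiv_X_of_ne n32, e4, mul_one, mul_zero, zero_mul, add_zero]
    ring
  have h23 : pderiv 2 (pderiv 3 f) =
      -(((j+2 : ℕ) : MvPolynomial (Fin 4) ℂ) * (((j+2 : ℕ) : MvPolynomial (Fin 4) ℂ) * (X 2 ^ (j+1) * X 3 ^ (j+1)))) := by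
    rw [h3]
    simp only [pd_neg, pderiv_natCast_mul, pderiv_natCast, pderiv_mul, pderiv_pow, pderiv_X_self,
      pderiv_X_of_ne n32, e3, mul_one, mul_zero, zero_mul, add_zero]
    ring
  have h30 : pderiv 3 (pderiv 0 f) = 0 := by
    rw [h0]
    simp only [pderiv_natCast_mul, pderiv_natCast, pderiv_mul, zero_mul, add_zero, zero_add, pderiv_pow, pderiv_X_of_ne n03, mul_zero]
  have h31 : pderiv 3 (pderiv 1 f) = 0 := by
    rw [h1]
    simp only [neg_mul, pd_neg, pderiv_natCast_mul, pderiv_natCast, pderiv_mul, zero_mul, add_zero, zero_add, pderiv_pow, pderiv_X_of_ne n13, mul_zero,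
      neg_zero]
  have h32 : pderiv 3 (pderiv 2 f) =
      -(((j+2 : ℕ) : MvPolynomial (Fin 4) ℂ) * (((j+2 : ℕ) : MvPolynomial (Fin 4) ℂ) * (X 2 ^ (j+1) * X 3 ^ (j+1)))) := by
    rw [h2]
    simp only [pd_neg, pderiv_natCast_mul, pderiv_natCast, pderiv_mul, pderiv_pow, pderiv_X_self,
      pderiv_X_of_ne n23, e3, mul_one, mul_zero, zero_mul, zero_add, add_zero]
    ring
  have h33 : pderiv 3 (pderiv 3 f) =
      -(((j+2 : ℕ) : MvPolynomial (Fin 4) ℂ) * (((j+1 : ℕ) : MvPolynomial (Fin 4) ℂ) * (X 2 ^ (j+2) * X 3 ^ j))) := by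
    rw [h3]
    simp only [pd_neg, pderiv_natCast_mul, pderiv_natCast, pderiv_mul, pderiv_pow, pderiv_X_self,
      pderiv_X_of_ne n23, e4, mul_one, mul_zero, zero_mul, zero_add, add_zero]
    ring
  rw [hess, hexp, h00, h01, h02, h03, h10, h11, h12, h13, h20, h21, h22, h23, h30, h31, h32, h33,
    det4]
  rw [show (C (2 * ((j:ℂ)+2) ^ 2 * (2 * ((j:ℂ)+2) - 1) ^ 2) : MvPolynomial (Fin 4) ℂ)
      = ((2 * (j+2)^2 * (2*j+3)^2 : ℕ) : MvPolynomial (Fin 4) ℂ) by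
    rw [← map_natCast (C : ℂ →+* MvPolynomial (Fin 4) ℂ) (2 * (j+2)^2 * (2*j+3)^2)]
    congr 1
    push_cast
    ring]
  push_cast
  ring

lemma stmt_one (f : MvPolynomial (Fin 4) ℂ)
    (hf : f = X 0 ^ 2 + C (1 - 2 * ((1:ℕ) : ℂ)) * X 1 ^ 2 - X 2 ^ 1 * X 3 ^ 1) :
    hess f
      = (C (2 * ((1:ℕ) : ℂ) ^ 2 * (2 * ((1:ℕ) : ℂ) - 1) ^ 2)
          * (X 0 * X 1 * X 2 * X 3) ^ (1 - 1)) ^ 2 := by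
  have n10 : (1 : Fin 4) ≠ 0 := by decide
  have n20 : (2 : Fin 4) ≠ 0 := by decide
  have n30 : (3 : Fin 4) ≠ 0 := by decide
  have n01 : (0 : Fin 4) ≠ 1 := by decide
  have n21 : (2 : Fin 4) ≠ 1 := by decide
  have n31 : (3 : Fin 4) ≠ 1 := by decide
  have n02 : (0 : Fin 4) ≠ 2 := by decide
  have n12 : (1 : Fin 4) ≠ 2 := by decide
  have n32 : (3 : Fin 4) ≠ 2 := by decide
  have n03 : (0 : Fin 4) ≠ 3 := by decide
  have n13 : (1 : Fin 4) ≠ 3 := by decide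
  have n23 : (2 : Fin 4) ≠ 3 := by decide
  have h0 : pderiv 0 f = ((2:ℕ) : MvPolynomial (Fin 4) ℂ) * X 0 ^ 1 := by
    subst hf
    simp only [pd_add, pd_sub, pderiv_mul, pderiv_pow, pderiv_C_mul, pderiv_X_self,
      pderiv_X_of_ne n10, pderiv_X_of_ne n20, pderiv_X_of_ne n30,
      mul_one, mul_zero, zero_mul, add_zero, zero_add, sub_zero, pderiv_C]
    try norm_num
  have h1 : pderiv 1 f = C (1 - 2 * ((1:ℕ) : ℂ)) * (((2:ℕ) : MvPolynomial (Fin 4) ℂ) * X 1 ^ 1) := by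
    subst hf
    simp only [pd_add, pd_sub, pderiv_mul, pderiv_pow, pderiv_C_mul, pderiv_X_self,
      pderiv_X_of_ne n01, pderiv_X_of_ne n21, pderiv_X_of_ne n31,
      mul_one, mul_zero, zero_mul, add_zero, zero_add, sub_zero, pderiv_C]
    try norm_num
  have h2 : pderiv 2 f = -(X 3 ^ 1) := by
    subst hf
    simp only [pd_add, pd_sub, pderiv_mul, pderiv_pow, pderiv_C_mul, pderiv_X_self,
      pderiv_X_of_ne n02, pderiv_X_of_ne n12, pderiv_X_of_ne n32, pow_one,
      mul_one, mul_zero, zero_mul, add_zero, zero_add, sub_zero, zero_sub, one_mul, pderiv_C]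
  have h3 : pderiv 3 f = -(X 2 ^ 1) := by
    subst hf
    simp only [pd_add, pd_sub, pderiv_mul, pderiv_pow, pderiv_C_mul, pderiv_X_self,
      pderiv_X_of_ne n03, pderiv_X_of_ne n13, pderiv_X_of_ne n23, pow_one,
      mul_one, mul_zero, zero_mul, add_zero, zero_add, sub_zero, zero_sub, one_mul, pderiv_C]
  have hexp : (Matrix.of fun i k : Fin 4 => pderiv i (pderiv k f)) =
      !![pderiv 0 (pderiv 0 f), pderiv 0 (pderiv 1 f), pderiv 0 (pderiv 2 f), pderiv 0 (pderiv 3 f);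
         pderiv 1 (pderiv 0 f), pderiv 1 (pderiv 1 f), pderiv 1 (pderiv 2 f), pderiv 1 (pderiv 3 f);
         pderiv 2 (pderiv 0 f), pderiv 2 (pderiv 1 f), pderiv 2 (pderiv 2 f), pderiv 2 (pderiv 3 f);
         pderiv 3 (pderiv 0 f), pderiv 3 (pderiv 1 f), pderiv 3 (pderiv 2 f), pderiv 3 (pderiv 3 f)] :=
    (Matrix.etaExpand_eq _).symm
  have h00 : pderiv 0 (pderiv 0 f) = ((2:ℕ) : MvPolynomial (Fin 4) ℂ) := by
    rw [h0]
    simp only [pderiv_natCast_mul, pderiv_pow, pderiv_X_self, pow_one, mul_one, pow_zero]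
    try norm_num
  have h01 : pderiv 0 (pderiv 1 f) = 0 := by
    rw [h1]
    simp only [pderiv_C_mul, pderiv_natCast_mul, pderiv_pow, pderiv_X_of_ne n10, mul_zero]
  have h02 : pderiv 0 (pderiv 2 f) = 0 := by
    rw [h2]
    simp only [pd_neg, pderiv_pow, pderiv_X_of_ne n30, mul_zero, neg_zero]
  have h03 : pderiv 0 (pderiv 3 f) = 0 := by
    rw [h3]
    simp only [pd_neg, pderiv_pow, pderiv_X_of_ne n20, mul_zero, neg_zero]
  have h10 : pderiv 1 (pderiv 0 f) = 0 := by
    rw [h0]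
    simp only [pderiv_natCast_mul, pderiv_pow, pderiv_X_of_ne n01, mul_zero]
  have h11 : pderiv 1 (pderiv 1 f) = C (1 - 2 * ((1:ℕ) : ℂ)) * ((2:ℕ) : MvPolynomial (Fin 4) ℂ) := by
    rw [h1]
    simp only [pderiv_C_mul, pderiv_natCast_mul, pderiv_pow, pderiv_X_self, pow_one, mul_one,
      pow_zero]
    try norm_num
  have h12 : pderiv 1 (pderiv 2 f) = 0 := by
    rw [h2]
    simp only [pd_neg, pderiv_pow, pderiv_X_of_ne n31, mul_zero, neg_zero]
  have h13 : pderiv 1 (pderiv 3 f) = 0 := by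
    rw [h3]
    simp only [pd_neg, pderiv_pow, pderiv_X_of_ne n21, mul_zero, neg_zero]
  have h20 : pderiv 2 (pderiv 0 f) = 0 := by
    rw [h0]
    simp only [pderiv_natCast_mul, pderiv_pow, pderiv_X_of_ne n02, mul_zero]
  have h21 : pderiv 2 (pderiv 1 f) = 0 := by
    rw [h1]
    simp only [pderiv_C_mul, pderiv_natCast_mul, pderiv_pow, pderiv_X_of_ne n12, mul_zero]
  have h22 : pderiv 2 (pderiv 2 f) = 0 := by
    rw [h2]
    simp only [pd_neg, pderiv_pow, pderiv_X_of_ne n32, mul_zero, neg_zero]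
  have h23 : pderiv 2 (pderiv 3 f) = -1 := by
    rw [h3]
    simp only [pd_neg, pderiv_pow, pderiv_X_self, pow_one, pow_zero, mul_one, one_mul]
    try norm_num
  have h30 : pderiv 3 (pderiv 0 f) = 0 := by
    rw [h0]
    simp only [pderiv_natCast_mul, pderiv_pow, pderiv_X_of_ne n03, mul_zero]
  have h31 : pderiv 3 (pderiv 1 f) = 0 := by
    rw [h1]
    simp only [pderiv_C_mul, pderiv_natCast_mul, pderiv_pow, pderiv_X_of_ne n13, mul_zero]
  have h32 : pderiv 3 (pderiv 2 f) = -1 := by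
    rw [h2]
    simp only [pd_neg, pderiv_pow, pderiv_X_self, pow_one, pow_zero, mul_one, one_mul]
    try norm_num
  have h33 : pderiv 3 (pderiv 3 f) = 0 := by
    rw [h3]
    simp only [pd_neg, pderiv_pow, pderiv_X_of_ne n23, mul_zero, neg_zero]
  rw [hess, hexp, h00, h01, h02, h03, h10, h11, h12, h13, h20, h21, h22, h23, h30, h31, h32, h33,
    det4]
  rw [show C (1 - 2 * ((1:ℕ) : ℂ)) = (-1 : MvPolynomial (Fin 4) ℂ) by
        norm_num,
      show C (2 * ((1:ℕ) : ℂ) ^ 2 * (2 * ((1:ℕ) : ℂ) - 1) ^ 2) = (2 : MvPolynomial (Fin 4) ℂ) by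
        norm_num [map_ofNat]]
  push_cast
  ring

theorem stmt_15 (m : ℕ) (hm : 1 ≤ m) (f : MvPolynomial (Fin 4) ℂ)
    (hf : f = X 0 ^ (2 * m) + C (1 - 2 * (m : ℂ)) * X 1 ^ (2 * m)
        - X 2 ^ m * X 3 ^ m) :
    hess f
      = (C (2 * (m : ℂ) ^ 2 * (2 * (m : ℂ) - 1) ^ 2)
          * (X 0 * X 1 * X 2 * X 3) ^ (m - 1)) ^ 2 := by
  rcases m with _ | _ | j
  · omega
  · exact stmt_one f (by rw [hf]; try norm_num)
  · have h := stmt_aux j f (by rw [hf]; push_cast [Nat.cast_ofNat]; ring_nf)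
    rw [h]
    simp only [Nat.succ_sub_one]
    push_cast
    ring_nf
end

section
/- The Hessian of f = (x_0 x_1 + x_2²)(x_0 + x_3) equals 4(x_0 x_1 + x_2²)(x_0 + x_3)²; in particular Hess(f) is not the fourth power of any linear polynomial. -/
set_option maxHeartbeats 1000000

open MvPolynomial

lemma det_fin_four' {R : Type*} [CommRing R] (A : Matrix (Fin 4) (Fin 4) R) :
    A.det =
      A 0 0 * (A 1 1 * A 2 2 * A 3 3 - A 1 1 * A 2 3 * A 3 2 - A 1 2 * A 2 1 * A 3 3
        + A 1 2 * A 2 3 * A 3 1 + A 1 3 * A 2 1 * A 3 2 - A 1 3 * A 2 2 * A 3 1)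
      - A 0 1 * (A 1 0 * A 2 2 * A 3 3 - A 1 0 * A 2 3 * A 3 2 - A 1 2 * A 2 0 * A 3 3
        + A 1 2 * A 2 3 * A 3 0 + A 1 3 * A 2 0 * A 3 2 - A 1 3 * A 2 2 * A 3 0)
      + A 0 2 * (A 1 0 * A 2 1 * A 3 3 - A 1 0 * A 2 3 * A 3 1 - A 1 1 * A 2 0 * A 3 3
        + A 1 1 * A 2 3 * A 3 0 + A 1 3 * A 2 0 * A 3 1 - A 1 3 * A 2 1 * A 3 0)
      - A 0 3 * (A 1 0 * A 2 1 * A 3 2 - A 1 0 * A 2 2 * A 3 1 - A 1 1 * A 2 0 * A 3 2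
        + A 1 1 * A 2 2 * A 3 0 + A 1 2 * A 2 0 * A 3 1 - A 1 2 * A 2 1 * A 3 0) := by
  rw [Matrix.det_succ_row_zero, Fin.sum_univ_four]
  simp (config := { decide := true }) [Matrix.det_fin_three, Matrix.submatrix_apply,
    Fin.succAbove, Fin.lt_def, show (Fin.succ 2 : Fin 4) = 3 from rfl,
    show (Fin.castSucc 2 : Fin 4) = 2 from rfl]
  ring

lemma hess_eq (f : MvPolynomial (Fin 4) ℂ)
    (hf : f = (X 0 * X 1 + X 2 ^ 2) * (X 0 + X 3)) :
    hess f = C 4 * (X 0 * X 1 + X 2 ^ 2) * (X 0 + X 3) ^ 2 := by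
  have key : ∀ (i j : Fin 4), (Matrix.of fun i j : Fin 4 => pderiv i (pderiv j f)) i j
      = pderiv i (pderiv j f) := fun _ _ => rfl
  rw [hess, det_fin_four']
  simp only [key, hf]
  have e0 : ∀ j : Fin 4, pderiv j ((X 0 * X 1 + X 2 ^ 2) * (X 0 + X 3) : MvPolynomial (Fin 4) ℂ) =
      (pderiv j (X 0) * X 1 + X 0 * pderiv j (X 1) + 2 * X 2 * pderiv j (X 2)) * (X 0 + X 3)
      + (X 0 * X 1 + X 2 ^ 2) * (pderiv j (X 0) + pderiv j (X 3)) := by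
    intro j
    simp [pderiv_mul, pderiv_pow]
    ring
  simp only [e0]
  have hc : ∀ j : Fin 4, pderiv j (2 : MvPolynomial (Fin 4) ℂ) = 0 := fun j => by
    rw [show (2 : MvPolynomial (Fin 4) ℂ) = C 2 from (map_ofNat C 2).symm, pderiv_C]
  simp [pderiv_mul, pderiv_pow, pderiv_X, Pi.single_apply, hc, map_ofNat]
  ring

/-- Substitution along the line `(t, 1, 0, 1 - t)`. -/
noncomputable def phi4 : MvPolynomial (Fin 4) ℂ →ₐ[ℂ] Polynomial ℂ :=
  aeval ![Polynomial.X, 1, 0, 1 - Polynomial.X]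

lemma not_fourth_power (l : MvPolynomial (Fin 4) ℂ) (hl : l.totalDegree ≤ 1)
    (h : C 4 * (X 0 * X 1 + X 2 ^ 2) * (X 0 + X 3) ^ 2 = l ^ 4) : False := by
  have h1 : phi4 (C 4 * (X 0 * X 1 + X 2 ^ 2) * (X 0 + X 3) ^ 2)
      = Polynomial.C 4 * Polynomial.X := by
    simp [phi4, Matrix.cons_val_zero, Matrix.cons_val_one]
  have h2 := congrArg phi4 h
  rw [h1, map_pow] at h2
  have hdeg : (phi4 l).natDegree ≤ 1 := by
    have := MvPolynomial.aeval_natDegree_le (n := 1) l hl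
      ![Polynomial.X, 1, 0, 1 - Polynomial.X] ?_
    · simpa [phi4] using this
    · intro i
      fin_cases i
      · exact Polynomial.natDegree_X_le
      · simp
      · simp
      · exact (Polynomial.natDegree_sub_le _ _).trans
          (by simp [Polynomial.natDegree_X_le])
  have := congrArg Polynomial.natDegree h2
  rw [Polynomial.natDegree_pow, Polynomial.natDegree_C_mul_X _ (by norm_num)] at this
  omega

theorem stmt_19 (f : MvPolynomial (Fin 4) ℂ)
    (hf : f = (X 0 * X 1 + X 2 ^ 2) * (X 0 + X 3)) :
    hess f = C 4 * (X 0 * X 1 + X 2 ^ 2) * (X 0 + X 3) ^ 2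
    ∧ ¬ ∃ l : MvPolynomial (Fin 4) ℂ, l.totalDegree ≤ 1 ∧ hess f = l ^ 4 := by
  refine ⟨hess_eq f hf, ?_⟩
  rintro ⟨l, hl, hpow⟩
  exact not_fourth_power l hl ((hess_eq f hf).symm.trans hpow)
end
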